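/- arXiv:1906.10498 — 2 statements merged into one kernel-verified Lean document; each statement's English description precedes it below -/
import Mathlib

section
/- Suppose A ∈ (0,1) a.s. and P(log((1-A)/A) > x) = x^{-α} L(x) for all x > η, where α > 1, η > 0 and L is slowly varying at infinity. Then lim_{m→∞} P(Z_1 > m) / [(log m)^{-α} L(log m)] = 1, where conditionally on A, Z_1 is geometric with success probability A (P(Z_1 = k | A) = A(1-A)^k). -/
/-!
Put `T = log ((1 - A) / A)`, so that `1 - A = σ T` for the logistic function `σ` and
`P(Z₁ > m) = E[σ(T) ^ (m + 1)]`. As `σ ^ (m + 1)` is increasing with values in `[0, 1]`,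
splitting according to whether `T > x` gives, for every `x`,
`σ(x) ^ (m + 1) P(T > x) ≤ P(Z₁ > m) ≤ P(T > x) + σ(x) ^ (m + 1)`.
Take `x = t log m`. Then `σ(x) ^ (m + 1) = (1 + m ^ (-t)) ^ (-(m + 1))` tends to `1` for `t > 1`
and is at most `exp (-m ^ (1 - t) / 2)` for `t < 1`, while slow variation of `L` gives
`P(T > t log m) / P(T > log m) → t ^ (-α)`. The error term is negligible: the tail
`G x = P(T > x)` is antitone with `G (2x) / G x → 2 ^ (-α)`, so it decays at most exponentially
and `P(T > log m) ≥ K m ^ (-c)`.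
Letting `t → 1` from both sides gives the limit.
-/

open MeasureTheory ProbabilityTheory Filter Set

section
open Real Topology

theorem measure_lt_eq_lintegral_one_sub_pow {Ω : Type*} [MeasurableSpace Ω] {μ : Measure Ω}
    {A : Ω → ℝ} (hA : Measurable A) (hA01 : ∀ ω, A ω ∈ Ioc (0 : ℝ) 1)
    {Z : Ω → ℕ} (hZ : Measurable Z)
    (hgeom : ∀ k : ℕ, μ {ω | Z ω = k} = ∫⁻ ω, ENNReal.ofReal (A ω * (1 - A ω) ^ k) ∂μ)
    (m : ℕ) :
    μ {ω | m < Z ω} = ∫⁻ ω, ENNReal.ofReal ((1 - A ω) ^ (m + 1)) ∂μ := by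
  have hunion : {ω | m < Z ω} = ⋃ k : ℕ, {ω | Z ω = m + 1 + k} := by
    ext ω
    simp only [mem_ofPred_eq, mem_iUnion]
    exact ⟨fun h => ⟨Z ω - (m + 1), by omega⟩, fun ⟨k, hk⟩ => by omega⟩
  have hgeomSum (ω : Ω) :
      HasSum (fun k : ℕ => A ω * (1 - A ω) ^ (m + 1 + k)) ((1 - A ω) ^ (m + 1)) := by
    obtain ⟨h0, h1⟩ := hA01 ω
    have h := (hasSum_geometric_of_lt_one (r := 1 - A ω) (by linarith) (by linarith)).mul_left
      (A ω * (1 - A ω) ^ (m + 1))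
    rw [sub_sub_cancel, mul_comm (A ω), mul_inv_cancel_right₀ h0.ne'] at h
    rwa [show (fun k : ℕ => A ω * (1 - A ω) ^ (m + 1 + k))
        = fun k => (1 - A ω) ^ (m + 1) * A ω * (1 - A ω) ^ k by funext k; ring]
  have hnonneg (ω : Ω) (k : ℕ) : 0 ≤ A ω * (1 - A ω) ^ (m + 1 + k) :=
    mul_nonneg (hA01 ω).1.le (pow_nonneg (sub_nonneg.2 (hA01 ω).2) _)
  rw [hunion, measure_iUnion]
  · simp_rw [hgeom]
    rw [← lintegral_tsum]
    · congr with ω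
      rw [← ENNReal.ofReal_tsum_of_nonneg (hnonneg ω) (hgeomSum ω).summable, (hgeomSum ω).tsum_eq]
    · intro k
      exact (hA.mul ((measurable_const.sub hA).pow_const _)).ennreal_ofReal.aemeasurable
  · intro i j hij
    exact Set.disjoint_left.2 fun ω hi hj => hij (by simp_all)
  · exact fun k => hZ (measurableSet_singleton _)

namespace Real

lemma sigmoid_log_div_one_sub {a : ℝ} (h0 : 0 < a) (h1 : a < 1) :
    sigmoid (log ((1 - a) / a)) = 1 - a := by
  have h1a : 0 < 1 - a := by linarith
  rw [sigmoid_def, exp_neg, exp_log (div_pos h1a h0), inv_div]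
  field_simp
  ring

lemma sigmoid_neg_mul_log_le_rpow {x : ℝ} (hx : 0 < x) (t : ℝ) :
    sigmoid (-(t * log x)) ≤ x ^ (-t) := by
  rw [rpow_def_of_pos hx, sigmoid_def, neg_neg, mul_neg, exp_neg, mul_comm]
  exact inv_anti₀ (exp_pos _) (by linarith)

lemma monotone_sigmoid_pow (n : ℕ) : Monotone fun x => sigmoid x ^ n :=
  fun _ _ hxy => pow_le_pow_left₀ (sigmoid_nonneg _) (sigmoid_le hxy) n

lemma sigmoid_pow_le_exp (x : ℝ) (n : ℕ) : sigmoid x ^ n ≤ exp (-(n * sigmoid (-x))) := by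
  have h : sigmoid x ≤ exp (-sigmoid (-x)) := by
    linarith [add_one_le_exp (-sigmoid (-x)), sigmoid_neg x]
  calc sigmoid x ^ n ≤ exp (-sigmoid (-x)) ^ n := pow_le_pow_left₀ (sigmoid_nonneg x) h n
    _ = exp (-(n * sigmoid (-x))) := by rw [← exp_nat_mul, mul_neg]

lemma one_sub_mul_sigmoid_neg_le_pow (x : ℝ) (n : ℕ) : 1 - n * sigmoid (-x) ≤ sigmoid x ^ n := by
  have h := one_add_mul_le_pow (a := -sigmoid (-x)) (by linarith [sigmoid_le_one (-x)]) n
  rwa [← sub_eq_add_neg, ← sigmoid_neg, neg_neg, mul_neg, ← sub_eq_add_neg] at h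

lemma tendsto_sigmoid_mul_log_pow {t : ℝ} (ht : 1 < t) :
    Tendsto (fun m : ℕ => sigmoid (t * log m) ^ (m + 1)) atTop (𝓝 1) := by
  have hrem : Tendsto (fun m : ℕ => ((m : ℝ) + 1) * (m : ℝ) ^ (-t)) atTop (𝓝 0) := by
    have hpow {r : ℝ} (hr : 0 < r) : Tendsto (fun m : ℕ => (m : ℝ) ^ (-r)) atTop (𝓝 0) :=
      (tendsto_rpow_neg_atTop hr).comp tendsto_natCast_atTop_atTop
    have h := (hpow (sub_pos.2 ht)).add (hpow (zero_lt_one.trans ht))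
    rw [add_zero] at h
    refine h.congr' ?_
    filter_upwards [eventually_gt_atTop 0] with m hm
    have hm' : (0 : ℝ) < m := Nat.cast_pos.2 hm
    rw [neg_sub, sub_eq_neg_add, rpow_add hm', rpow_one]
    ring
  refine tendsto_of_tendsto_of_tendsto_of_le_of_le' (by simpa using tendsto_const_nhds.sub hrem)
    tendsto_const_nhds ?_
    (Eventually.of_forall fun m => pow_le_one₀ (sigmoid_nonneg _) (sigmoid_le_one _))
  filter_upwards [eventually_gt_atTop 0] with m hm
  calc 1 - ((m : ℝ) + 1) * (m : ℝ) ^ (-t)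
      ≤ 1 - ((m + 1 : ℕ) : ℝ) * sigmoid (-(t * log m)) := by
        push_cast
        gcongr
        exact sigmoid_neg_mul_log_le_rpow (Nat.cast_pos.2 hm) t
    _ ≤ sigmoid (t * log m) ^ (m + 1) := one_sub_mul_sigmoid_neg_le_pow _ _

lemma tendsto_sigmoid_mul_log_pow_mul_rpow {s : ℝ} (hs0 : 0 ≤ s) (hs1 : s < 1) (c : ℝ) :
    Tendsto (fun m : ℕ => sigmoid (s * log m) ^ (m + 1) * (m : ℝ) ^ c) atTop (𝓝 0) := by
  have h1s : 0 < 1 - s := sub_pos.2 hs1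
  have hdom : Tendsto (fun m : ℕ => exp (-(1 / 2) * (m : ℝ) ^ (1 - s)) * (m : ℝ) ^ c)
      atTop (𝓝 0) := by
    have h := (tendsto_rpow_mul_exp_neg_mul_atTop_nhds_zero (c / (1 - s)) (1 / 2)
      (by norm_num)).comp ((tendsto_rpow_atTop h1s).comp tendsto_natCast_atTop_atTop)
    refine h.congr fun m => ?_
    simp only [Function.comp_apply]
    rw [← rpow_mul m.cast_nonneg, mul_div_cancel₀ _ h1s.ne', mul_comm]
  refine squeeze_zero' (Eventually.of_forall fun m =>
    mul_nonneg (pow_nonneg (sigmoid_nonneg _) _) (rpow_nonneg m.cast_nonneg _)) ?_ hdom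
  filter_upwards [eventually_ge_atTop 1] with m hm
  have hm1 : (1 : ℝ) ≤ m := Nat.one_le_cast.2 hm
  have hm0 : (0 : ℝ) < m := zero_lt_one.trans_le hm1
  have hexp : (1 / 2) * (m : ℝ) ^ (1 - s) ≤ ((m + 1 : ℕ) : ℝ) * sigmoid (-(s * log m)) := by
    have hsplit : (m : ℝ) ^ (1 - s) * (m : ℝ) ^ s = m := by
      rw [← rpow_add hm0, sub_add_cancel, rpow_one]
    have hle : (m : ℝ) ^ (1 - s) ≤ m := by
      simpa using rpow_le_rpow_of_exponent_le hm1 (by linarith : 1 - s ≤ 1)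
    rw [sigmoid_def, neg_neg, mul_comm s, ← rpow_def_of_pos hm0, ← div_eq_mul_inv,
      le_div_iff₀ (by positivity)]
    push_cast
    nlinarith
  gcongr
  calc sigmoid (s * log m) ^ (m + 1) ≤ exp (-(((m + 1 : ℕ) : ℝ) * sigmoid (-(s * log m)))) :=
        sigmoid_pow_le_exp _ _
    _ ≤ exp (-(1 / 2) * (m : ℝ) ^ (1 - s)) := by
        rw [exp_le_exp]
        linarith

end Real

lemma measureReal_lt_eq_integral_sigmoid_pow {Ω : Type*} [MeasurableSpace Ω] {μ : Measure Ω}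
    {A : Ω → ℝ} (hA : Measurable A) (hA01 : ∀ ω, A ω ∈ Ioo (0 : ℝ) 1)
    {Z : Ω → ℕ} (hZ : Measurable Z)
    (hgeom : ∀ k : ℕ, μ {ω | Z ω = k} = ∫⁻ ω, ENNReal.ofReal (A ω * (1 - A ω) ^ k) ∂μ)
    (m : ℕ) :
    μ.real {ω | m < Z ω} = ∫ ω, sigmoid (log ((1 - A ω) / A ω)) ^ (m + 1) ∂μ := by
  have hpt : (fun ω => sigmoid (log ((1 - A ω) / A ω)) ^ (m + 1)) = fun ω => (1 - A ω) ^ (m + 1) :=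
    funext fun ω => by rw [sigmoid_log_div_one_sub (hA01 ω).1 (hA01 ω).2]
  have hnonneg : 0 ≤ᵐ[μ] fun ω => (1 - A ω) ^ (m + 1) :=
    Eventually.of_forall fun ω => pow_nonneg (sub_nonneg.2 (hA01 ω).2.le) _
  rw [hpt, integral_eq_lintegral_of_nonneg_ae hnonneg
    ((measurable_const.sub hA).pow_const _).aestronglyMeasurable, measureReal_def,
    measure_lt_eq_lintegral_one_sub_pow hA (fun ω => Ioo_subset_Ioc_self (hA01 ω)) hZ hgeom]

section Sandwich

variable {Ω : Type*} [MeasurableSpace Ω] {μ : Measure Ω} [IsProbabilityMeasure μ]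
  {T : Ω → ℝ} {f : ℝ → ℝ}

lemma integrable_comp_of_monotone (hT : Measurable T) (hf : Monotone f) (hf0 : 0 ≤ f)
    (hf1 : f ≤ 1) : Integrable (fun ω => f (T ω)) μ :=
  Integrable.of_bound (hf.measurable.comp hT).aestronglyMeasurable 1
    (Eventually.of_forall fun ω => by
      rw [Real.norm_of_nonneg (hf0 _)]
      exact hf1 _)

lemma mul_measureReal_lt_le_integral (hT : Measurable T) (hf : Monotone f) (hf0 : 0 ≤ f)
    (hf1 : f ≤ 1) (x : ℝ) : f x * μ.real {ω | x < T ω} ≤ ∫ ω, f (T ω) ∂μ := by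
  have hS : MeasurableSet {ω | x < T ω} := measurableSet_lt measurable_const hT
  rw [mul_comm, ← smul_eq_mul, ← integral_indicator_const _ hS]
  refine integral_mono ((integrable_const _).indicator hS)
    (integrable_comp_of_monotone hT hf hf0 hf1) fun ω => ?_
  by_cases hω : x < T ω
  · simpa [indicator_of_mem (show ω ∈ {ω | x < T ω} from hω)] using hf hω.le
  · simpa [indicator_of_notMem (show ω ∉ {ω | x < T ω} from hω)] using hf0 _

lemma integral_le_measureReal_lt_add (hT : Measurable T) (hf : Monotone f) (hf0 : 0 ≤ f)
    (hf1 : f ≤ 1) (x : ℝ) : ∫ ω, f (T ω) ∂μ ≤ μ.real {ω | x < T ω} + f x := by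
  have hS : MeasurableSet {ω | x < T ω} := measurableSet_lt measurable_const hT
  calc ∫ ω, f (T ω) ∂μ ≤ ∫ ω, ({ω | x < T ω}.indicator 1 ω + f x) ∂μ := by
        refine integral_mono (integrable_comp_of_monotone hT hf hf0 hf1)
          (((integrable_const 1).indicator hS).add (integrable_const _)) fun ω => ?_
        by_cases hω : x < T ω
        · simpa [indicator_of_mem (show ω ∈ {ω | x < T ω} from hω)] using
            (hf1 (T ω)).trans (le_add_of_nonneg_right (hf0 x))
        · simpa [indicator_of_notMem (show ω ∉ {ω | x < T ω} from hω)] using hf (not_lt.1 hω)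
    _ = μ.real {ω | x < T ω} + f x := by
        rw [integral_add ((integrable_const 1).indicator hS) (integrable_const _),
          integral_indicator_one hS, integral_const, probReal_univ, one_smul]

end Sandwich

lemma tendsto_div_of_eq_rpow_mul {G L : ℝ → ℝ} {α η t : ℝ} (hGL : ∀ x > η, G x = x ^ (-α) * L x)
    (hL : ∀ x, L x ≠ 0) (ht : 0 < t) (hLt : Tendsto (fun x => L (t * x) / L x) atTop (𝓝 1)) :
    Tendsto (fun x => G (t * x) / G x) atTop (𝓝 (t ^ (-α))) := by
  have h := hLt.const_mul (t ^ (-α))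
  rw [mul_one] at h
  refine h.congr' ?_
  filter_upwards [eventually_gt_atTop (max η 0),
    (tendsto_id.const_mul_atTop ht).eventually (eventually_gt_atTop η)] with x hx (htx : η < t * x)
  have hx0 : 0 < x := (le_max_right _ _).trans_lt hx
  rw [hGL _ htx, hGL _ ((le_max_left _ _).trans_lt hx), mul_rpow ht.le hx0.le]
  have := hL x
  have := (rpow_pos_of_pos hx0 (-α)).ne'
  field_simp

lemma exists_mul_exp_le_of_antitone {G : ℝ → ℝ} (hG : Antitone G) {r : ℝ} (hr : 0 < r)
    (h2 : Tendsto (fun x => G (2 * x) / G x) atTop (𝓝 r)) (hpos : ∀ᶠ x in atTop, 0 < G x) :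
    ∃ K c : ℝ, 0 < K ∧ ∀ᶠ x in atTop, K * exp (-(c * x)) ≤ G x := by
  set q := min (r / 2) (1 / 2)
  have hq0 : 0 < q := lt_min (half_pos hr) one_half_pos
  have hq1 : q < 1 := (min_le_right _ _).trans_lt (by norm_num)
  obtain ⟨x₀, hx₀⟩ := ((h2.eventually (eventually_gt_nhds ((min_le_left _ _).trans_lt
    (half_lt_self hr)))).and (hpos.and (eventually_ge_atTop 1))).exists_forall_of_atTop
  have hstep : ∀ x ≥ x₀, q * G x ≤ G (2 * x) := fun x hx => by
    obtain ⟨hlt, hGx, -⟩ := hx₀ x hx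
    exact ((lt_div_iff₀ hGx).1 hlt).le
  have hx₀1 : 1 ≤ x₀ := (hx₀ x₀ le_rfl).2.2
  have hiter : ∀ n : ℕ, q ^ n * G x₀ ≤ G (2 ^ n * x₀) := by
    intro n
    induction n with
    | zero => simp
    | succ n ih =>
      have hle : x₀ ≤ 2 ^ n * x₀ :=
        le_mul_of_one_le_left (by linarith) (one_le_pow₀ (by norm_num))
      calc q ^ (n + 1) * G x₀ = q * (q ^ n * G x₀) := by ring
        _ ≤ q * G (2 ^ n * x₀) := mul_le_mul_of_nonneg_left ih hq0.le
        _ ≤ G (2 * (2 ^ n * x₀)) := hstep _ hle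
        _ = G (2 ^ (n + 1) * x₀) := by ring_nf
  refine ⟨q * G x₀, -log q, mul_pos hq0 (hx₀ x₀ le_rfl).2.1, ?_⟩
  filter_upwards [eventually_ge_atTop x₀] with x hx
  set n := ⌈x⌉₊
  have hxn : x ≤ 2 ^ n * x₀ :=
    calc x ≤ n := Nat.le_ceil x
      _ ≤ 2 ^ n := by exact_mod_cast Nat.lt_two_pow_self.le
      _ ≤ 2 ^ n * x₀ := le_mul_of_one_le_right (by positivity) hx₀1
  have hn : (n : ℝ) ≤ x + 1 := (Nat.ceil_lt_add_one (by linarith)).le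
  calc q * G x₀ * exp (-(-log q * x)) = exp (log q * (x + 1)) * G x₀ := by
        rw [neg_mul, neg_neg, mul_add, mul_one, exp_add, exp_log hq0]
        ring
    _ ≤ exp (log q * n) * G x₀ :=
        mul_le_mul_of_nonneg_right (exp_le_exp.2
          (mul_le_mul_of_nonpos_left hn (log_nonpos hq0.le hq1.le))) (hx₀ x₀ le_rfl).2.1.le
    _ = q ^ n * G x₀ := by rw [mul_comm (log q), exp_nat_mul, exp_log hq0]
    _ ≤ G x := (hiter n).trans (hG hxn)

lemma tendsto_sigmoid_mul_log_pow_div_of_mul_exp_le {G : ℝ → ℝ} {K c s : ℝ} (hK : 0 < K)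
    (hKG : ∀ᶠ x in atTop, K * exp (-(c * x)) ≤ G x) (hs0 : 0 ≤ s) (hs1 : s < 1) :
    Tendsto (fun m : ℕ => sigmoid (s * log m) ^ (m + 1) / G (log m)) atTop (𝓝 0) := by
  have hlim := (tendsto_sigmoid_mul_log_pow_mul_rpow hs0 hs1 c).div_const K
  rw [zero_div] at hlim
  have hKG' := (tendsto_log_atTop.comp tendsto_natCast_atTop_atTop).eventually hKG
  refine squeeze_zero' ?_ ?_ hlim
  · filter_upwards [hKG'] with m hm
    exact div_nonneg (pow_nonneg (sigmoid_nonneg _) _) ((mul_pos hK (exp_pos _)).le.trans hm)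
  filter_upwards [hKG', eventually_gt_atTop 0] with m (hm : K * exp (-(c * log m)) ≤ G (log m))
    hm0
  have hmc : exp (-(c * log m)) = ((m : ℝ) ^ c)⁻¹ := by
    rw [rpow_def_of_pos (Nat.cast_pos.2 hm0), mul_comm, exp_neg]
  rw [hmc] at hm
  calc sigmoid (s * log m) ^ (m + 1) / G (log m)
      ≤ sigmoid (s * log m) ^ (m + 1) / (K * ((m : ℝ) ^ c)⁻¹) :=
        div_le_div_of_nonneg_left (pow_nonneg (sigmoid_nonneg _) _) (by positivity) hm
    _ = sigmoid (s * log m) ^ (m + 1) * (m : ℝ) ^ c / K := by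
        field_simp

lemma tendsto_of_lower_upper_families {ι : Type*} {l : Filter ι} {u : ι → ℝ} {f : ℝ → ℝ}
    {p q : Filter ℝ} [p.NeBot] [q.NeBot] {y : ℝ} (hfp : Tendsto f p (𝓝 y))
    (hfq : Tendsto f q (𝓝 y))
    (hlow : ∀ᶠ t in p, ∃ v : ι → ℝ, Tendsto v l (𝓝 (f t)) ∧ ∀ᶠ i in l, v i ≤ u i)
    (hup : ∀ᶠ t in q, ∃ w : ι → ℝ, Tendsto w l (𝓝 (f t)) ∧ ∀ᶠ i in l, u i ≤ w i) :
    Tendsto u l (𝓝 y) := by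
  refine tendsto_order.2 ⟨fun a ha => ?_, fun b hb => ?_⟩
  · obtain ⟨t, ⟨v, hv, hvu⟩, hat⟩ := (hlow.and (hfp.eventually (eventually_gt_nhds ha))).exists
    filter_upwards [hv.eventually (eventually_gt_nhds hat), hvu] with i h1 h2
    exact h1.trans_le h2
  · obtain ⟨t, ⟨w, hw, huw⟩, htb⟩ := (hup.and (hfq.eventually (eventually_lt_nhds hb))).exists
    filter_upwards [hw.eventually (eventually_lt_nhds htb), huw] with i h1 h2
    exact h2.trans_lt h1

theorem tendsto_div_of_sigmoid_pow_sandwich {G L : ℝ → ℝ} {α η : ℝ} (hG : Antitone G)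
    (hGL : ∀ x > η, G x = x ^ (-α) * L x) (hL : ∀ x, 0 < L x)
    (hsv : ∀ t > 0, Tendsto (fun x => L (t * x) / L x) atTop (𝓝 1)) {F : ℕ → ℝ}
    (hF : ∀ (m : ℕ) (x : ℝ),
      sigmoid x ^ (m + 1) * G x ≤ F m ∧ F m ≤ G x + sigmoid x ^ (m + 1)) :
    Tendsto (fun m : ℕ => F m / G (log m)) atTop (𝓝 1) := by
  have hlog : Tendsto (fun m : ℕ => log m) atTop atTop :=
    tendsto_log_atTop.comp tendsto_natCast_atTop_atTop
  have hratio (t : ℝ) (ht : 0 < t) := tendsto_div_of_eq_rpow_mul hGL (fun x => (hL x).ne') ht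
    (hsv t ht)
  have hGpos : ∀ᶠ x in atTop, 0 < G x := by
    filter_upwards [eventually_gt_atTop (max η 0)] with x hx
    rw [hGL x ((le_max_left _ _).trans_lt hx)]
    exact mul_pos (rpow_pos_of_pos ((le_max_right _ _).trans_lt hx) _) (hL x)
  obtain ⟨K, c, hK, hKG⟩ := exists_mul_exp_le_of_antitone hG (by positivity) (hratio 2 two_pos)
    hGpos
  have hGlog := hlog.eventually hGpos
  have hrpow : Tendsto (fun t : ℝ => t ^ (-α)) (𝓝 1) (𝓝 1) := by
    simpa using (continuousAt_rpow_const 1 (-α) (Or.inl one_ne_zero)).tendsto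
  refine tendsto_of_lower_upper_families (hrpow.mono_left nhdsWithin_le_nhds)
    (hrpow.mono_left nhdsWithin_le_nhds) (p := 𝓝[>] 1) (q := 𝓝[<] 1) ?_ ?_
  · filter_upwards [self_mem_nhdsWithin] with t (ht : 1 < t)
    have hv := (tendsto_sigmoid_mul_log_pow ht).mul ((hratio t (zero_lt_one.trans ht)).comp hlog)
    rw [one_mul] at hv
    refine ⟨_, hv, ?_⟩
    filter_upwards [hGlog] with m hm
    rw [Function.comp_apply, ← mul_div_assoc]
    exact div_le_div_of_nonneg_right (hF m _).1 hm.le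
  · filter_upwards [Ioo_mem_nhdsLT zero_lt_one] with s ⟨hs0, hs1⟩
    have hrem := tendsto_sigmoid_mul_log_pow_div_of_mul_exp_le hK hKG hs0.le hs1
    have hw := ((hratio s hs0).comp hlog).add hrem
    rw [add_zero] at hw
    refine ⟨_, hw, ?_⟩
    filter_upwards [hGlog] with m hm
    rw [Function.comp_apply, ← add_div]
    exact div_le_div_of_nonneg_right (hF m _).2 hm.le

end

theorem tail_first_generation_general
    {Ω : Type*} [MeasurableSpace Ω] (μ : Measure Ω) [IsProbabilityMeasure μ]
    (A : Ω → ℝ) (hA : Measurable A) (hA01 : ∀ ω, A ω ∈ Set.Ioo (0:ℝ) 1)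
    (Z : Ω → ℕ) (hZ : Measurable Z)
    (α η : ℝ)
    (L : ℝ → ℝ) (hLpos : ∀ x, 0 < L x)
    (hsv : ∀ t > (0:ℝ), Tendsto (fun x => L (t * x) / L x) atTop (nhds 1))
    (htail : ∀ x > η,
      (μ {ω | x < Real.log ((1 - A ω) / A ω)}).toReal = x ^ (-α) * L x)
    (hcond : ∀ (k : ℕ) (s : Set ℝ), MeasurableSet s →
      μ {ω | Z ω = k ∧ A ω ∈ s}
        = ∫⁻ ω in A ⁻¹' s, ENNReal.ofReal (A ω * (1 - A ω) ^ k) ∂μ) :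
    Tendsto
      (fun m : ℕ =>
        (μ {ω | m < Z ω}).toReal /
          ((Real.log m) ^ (-α) * L (Real.log m)))
      atTop (nhds 1) := by
  set T : Ω → ℝ := fun ω => Real.log ((1 - A ω) / A ω)
  have hT : Measurable T := ((measurable_const.sub hA).div hA).log
  have hF (m : ℕ) := measureReal_lt_eq_integral_sigmoid_pow hA hA01 hZ
    (fun k => by simpa using hcond k univ MeasurableSet.univ) m
  have hf0 (m : ℕ) : 0 ≤ fun x => Real.sigmoid x ^ (m + 1) :=
    fun _ => pow_nonneg (Real.sigmoid_nonneg _) _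
  have hf1 (m : ℕ) : (fun x => Real.sigmoid x ^ (m + 1)) ≤ 1 :=
    fun _ => pow_le_one₀ (Real.sigmoid_nonneg _) (Real.sigmoid_le_one _)
  have hlim := tendsto_div_of_sigmoid_pow_sandwich (G := fun x => μ.real {ω | x < T ω})
    (fun x y hxy => measureReal_mono fun ω hω => hxy.trans_lt hω) htail hLpos hsv
    (F := fun m => μ.real {ω | m < Z ω}) fun m x => by
      rw [hF]
      exact ⟨mul_measureReal_lt_le_integral hT (Real.monotone_sigmoid_pow _) (hf0 m) (hf1 m) x,
        integral_le_measureReal_lt_add hT (Real.monotone_sigmoid_pow _) (hf0 m) (hf1 m) x⟩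
  refine hlim.congr' ?_
  filter_upwards [(Real.tendsto_log_atTop.comp tendsto_natCast_atTop_atTop).eventually
    (eventually_gt_atTop η)] with m (hm : η < Real.log m)
  rw [← htail _ hm]
  rfl

theorem tail_first_generation
    {Ω : Type*} [MeasurableSpace Ω] (μ : Measure Ω) [IsProbabilityMeasure μ]
    (A : Ω → ℝ) (hA : Measurable A) (hA01 : ∀ ω, A ω ∈ Set.Ioo (0:ℝ) 1)
    (Z : Ω → ℕ) (hZ : Measurable Z)
    (α η : ℝ) (hα : 1 < α) (hη : 0 < η)
    (L : ℝ → ℝ) (hLpos : ∀ x, 0 < L x) (hLmeas : Measurable L)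
    (hsv : ∀ t > (0:ℝ), Tendsto (fun x => L (t * x) / L x) atTop (nhds 1))
    (htail : ∀ x > η,
      (μ {ω | x < Real.log ((1 - A ω) / A ω)}).toReal = x ^ (-α) * L x)
    (hcond : ∀ (k : ℕ) (s : Set ℝ), MeasurableSet s →
      μ {ω | Z ω = k ∧ A ω ∈ s}
        = ∫⁻ ω in A ⁻¹' s, ENNReal.ofReal (A ω * (1 - A ω) ^ k) ∂μ) :
    Tendsto
      (fun m : ℕ =>
        (μ {ω | m < Z ω}).toReal /
          ((Real.log m) ^ (-α) * L (Real.log m)))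
      atTop (nhds 1) :=
  tail_first_generation_general μ A hA hA01 Z hZ α η L hLpos hsv htail hcond
end

section
/- Let μ be a finite measure on (0, c] for some c > 0 whose tail U(u) := μ((0, u]) satisfies U(u) ~ (-log u)^{-α} L(-log u) as u → 0+, where α > 0 and L is slowly varying at infinity. Then the Laplace transform satisfies ∫_{(0,c]} e^{-mu} dμ(u) ~ (log m)^{-α} L(log m) as m → ∞. -/
/-!
Put `V x = U(e^{-x})`. Since `x ↦ x^{-α} L x` is regularly varying of index `-α` and `V` is
asymptotic to it, `V` is regularly varying too; being monotone, it then satisfies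
`V (p x) / V x → 1` whenever `p x / x → 1`, by squeezing `p x` between `t x` and `t' x` with
`t, t'` close to `1`. At `m = e^x`, the Laplace transform lies between
`e^{-1/x} U(e^{-x}/x)` (restricting to `(0, e^{-x}/x]`) and `U(x e^{-x}) + e^{-x} μ(ℝ)`
(splitting at `x e^{-x}`), i.e. between `e^{-1/x} V(x + log x)` and `V(x - log x) + e^{-x} μ(ℝ)`.
Both are `~ V x`, the error term because a monotone `V` with `V(x+1)/V(x) → 1` decays slower
than any exponential.
-/

open MeasureTheory Filter Set

open Asymptotics Topology

def IsRegularlyVarying (f : ℝ → ℝ) (ρ : ℝ) : Prop :=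
  ∀ t > (0 : ℝ), Tendsto (fun x => f (t * x) / f x) atTop (𝓝 (t ^ ρ))

namespace IsRegularlyVarying

variable {f g : ℝ → ℝ} {ρ : ℝ}

theorem rpow_mul (hf : IsRegularlyVarying f 0) (ρ : ℝ) :
    IsRegularlyVarying (fun x => x ^ ρ * f x) ρ := by
  intro t ht
  have := (hf t ht).const_mul (t ^ ρ)
  rw [Real.rpow_zero, mul_one] at this
  refine this.congr' ?_
  filter_upwards [eventually_gt_atTop 0] with x hx
  rw [mul_div_mul_comm, Real.mul_rpow ht.le hx.le, mul_div_cancel_right₀ _ (by positivity)]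

theorem congr_isEquivalent (hg : IsRegularlyVarying g ρ) (hfg : f ~[atTop] g) :
    IsRegularlyVarying f ρ := fun t ht =>
  ((hfg.comp_tendsto (tendsto_id.const_mul_atTop ht)).div hfg).symm.tendsto_nhds (hg t ht)

end IsRegularlyVarying

namespace Antitone

variable {f : ℝ → ℝ}

theorem tendsto_comp_div_of_isRegularlyVarying {ρ : ℝ} (hf : Antitone f)
    (hpos : ∀ᶠ x in atTop, 0 < f x) (hrv : IsRegularlyVarying f ρ) {p : ℝ → ℝ}
    (hp : Tendsto (fun x => p x / x) atTop (𝓝 1)) :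
    Tendsto (fun x => f (p x) / f x) atTop (𝓝 1) := by
  have hcont : Tendsto (fun t : ℝ => t ^ ρ) (𝓝 1) (𝓝 1) := by
    simpa using (Real.continuousAt_rpow_const 1 ρ (Or.inl one_ne_zero)).tendsto
  refine tendsto_order.2 ⟨fun a ha => ?_, fun b hb => ?_⟩
  · obtain ⟨t, hta, ht⟩ := (((hcont.mono_left nhdsWithin_le_nhds).eventually
      (lt_mem_nhds ha)).and (self_mem_nhdsWithin (s := Ioi 1))).exists
    filter_upwards [(hrv t (zero_lt_one.trans ht)).eventually (lt_mem_nhds hta),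
      hp.eventually (gt_mem_nhds ht), hpos, eventually_gt_atTop 0] with x hlt hpx hfx hx
    have : p x ≤ t * x := ((div_lt_iff₀ hx).1 hpx).le
    exact hlt.trans_le (div_le_div_of_nonneg_right (hf this) hfx.le)
  · obtain ⟨t, htb, ht⟩ := (((hcont.mono_left nhdsWithin_le_nhds).eventually
      (gt_mem_nhds hb)).and (Ioo_mem_nhdsLT (zero_lt_one' ℝ))).exists
    filter_upwards [(hrv t ht.1).eventually (gt_mem_nhds htb),
      hp.eventually (lt_mem_nhds ht.2), hpos, eventually_gt_atTop 0] with x hlt hpx hfx hx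
    have : t * x ≤ p x := ((lt_div_iff₀ hx).1 hpx).le
    exact (div_le_div_of_nonneg_right (hf this) hfx.le).trans_lt hlt

theorem exists_pos_mul_exp_neg_le (hf : Antitone f)
    (hpos : ∀ᶠ x in atTop, 0 < f x) (hstep : Tendsto (fun x => f (x + 1) / f x) atTop (𝓝 1))
    {δ : ℝ} (hδ : 0 < δ) : ∃ C > 0, ∀ᶠ x in atTop, C * Real.exp (-(δ * x)) ≤ f x := by
  obtain ⟨X, hX⟩ := eventually_atTop.1
    ((hstep.eventually (lt_mem_nhds (Real.exp_lt_one_iff.2 (neg_lt_zero.2 hδ)))).and hpos)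
  have hXstep : ∀ x ≥ X, Real.exp (-δ) * f x ≤ f (x + 1) := fun x hx =>
    ((lt_div_iff₀ (hX x hx).2).1 (hX x hx).1).le
  have hfX : 0 < f X := (hX X le_rfl).2
  have hiter : ∀ n : ℕ, Real.exp (-(δ * n)) * f X ≤ f (X + n) := by
    intro n
    induction n with
    | zero => simp
    | succ n ih =>
      calc Real.exp (-(δ * ↑(n + 1))) * f X = Real.exp (-δ) * (Real.exp (-(δ * n)) * f X) := by
            rw [← mul_assoc, ← Real.exp_add]; push_cast; ring_nf
        _ ≤ Real.exp (-δ) * f (X + n) := by gcongr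
        _ ≤ f (X + n + 1) := hXstep _ (by linarith [n.cast_nonneg (α := ℝ)])
        _ = f (X + ↑(n + 1)) := by push_cast; ring_nf
  refine ⟨Real.exp (-(δ * (1 - X))) * f X, by positivity, ?_⟩
  filter_upwards [eventually_ge_atTop X] with x hx
  have hceil : x - X ≤ ⌈x - X⌉₊ := Nat.le_ceil _
  have hceil' : (⌈x - X⌉₊ : ℝ) < x - X + 1 := Nat.ceil_lt_add_one (sub_nonneg.2 hx)
  calc Real.exp (-(δ * (1 - X))) * f X * Real.exp (-(δ * x))
      = Real.exp (-(δ * (x - X + 1))) * f X := by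
        rw [mul_right_comm, ← Real.exp_add]; ring_nf
    _ ≤ Real.exp (-(δ * ⌈x - X⌉₊)) * f X := by gcongr
    _ ≤ f (X + ⌈x - X⌉₊) := hiter _
    _ ≤ f x := hf (by linarith)

theorem tendsto_exp_neg_div_of_isRegularlyVarying {ρ : ℝ} (hf : Antitone f)
    (hpos : ∀ᶠ x in atTop, 0 < f x) (hrv : IsRegularlyVarying f ρ) :
    Tendsto (fun x => Real.exp (-x) / f x) atTop (𝓝 0) := by
  have hstep : Tendsto (fun x : ℝ => (x + 1) / x) atTop (𝓝 1) := by
    have := (tendsto_inv_atTop_zero (𝕜 := ℝ)).const_add 1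
    rw [add_zero] at this
    refine this.congr' ?_
    filter_upwards [eventually_gt_atTop 0] with x hx
    field_simp
  obtain ⟨C, hC, hle⟩ := hf.exists_pos_mul_exp_neg_le hpos
    (hf.tendsto_comp_div_of_isRegularlyVarying hpos hrv hstep) one_half_pos
  have hdecay : Tendsto (fun x => C⁻¹ * Real.exp (-(1 / 2 * x))) atTop (𝓝 0) := by
    simpa using (Real.tendsto_exp_neg_atTop_nhds_zero.comp
      (tendsto_id.const_mul_atTop one_half_pos)).const_mul C⁻¹
  refine squeeze_zero' ?_ ?_ hdecay
  · filter_upwards [hpos] with x hx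
    positivity
  filter_upwards [hle] with x hx
  calc Real.exp (-x) / f x ≤ Real.exp (-x) / (C * Real.exp (-(1 / 2 * x))) := by gcongr
    _ = C⁻¹ * Real.exp (-(1 / 2 * x)) := by
      rw [show Real.exp (-x) = Real.exp (-(1 / 2 * x)) * Real.exp (-(1 / 2 * x)) by
        rw [← Real.exp_add]; ring_nf]
      field_simp

end Antitone

noncomputable def laplaceIoc (μ : Measure ℝ) (c m : ℝ) : ℝ :=
  (∫⁻ u in Ioc 0 c, ENNReal.ofReal (Real.exp (-(m * u))) ∂μ).toReal

noncomputable def logTail (μ : Measure ℝ) (x : ℝ) : ℝ :=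
  (μ (Ioc 0 (Real.exp (-x)))).toReal

section Laplace

variable (μ : Measure ℝ) {c m : ℝ}

theorem lintegral_exp_neg_mul_le (hm : 0 ≤ m) (s : ℝ) :
    ∫⁻ u in Ioc 0 c, ENNReal.ofReal (Real.exp (-(m * u))) ∂μ ≤
      μ (Ioc 0 s) + ENNReal.ofReal (Real.exp (-(m * s))) * μ univ := by
  calc ∫⁻ u in Ioc 0 c, ENNReal.ofReal (Real.exp (-(m * u))) ∂μ
      ≤ ∫⁻ u in Ioc 0 c, ((Ioc 0 s).indicator 1 u + ENNReal.ofReal (Real.exp (-(m * s)))) ∂μ := by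
        refine setLIntegral_mono' measurableSet_Ioc fun u hu => ?_
        by_cases hus : u ≤ s
        · rw [indicator_of_mem (show u ∈ Ioc 0 s from ⟨hu.1, hus⟩), Pi.one_apply]
          refine le_add_right (ENNReal.ofReal_le_one.2 (Real.exp_le_one_iff.2 ?_))
          nlinarith [hu.1]
        · refine le_add_left (ENNReal.ofReal_le_ofReal (Real.exp_le_exp.2 ?_))
          nlinarith [not_le.1 hus]
    _ ≤ ∫⁻ u, ((Ioc 0 s).indicator 1 u + ENNReal.ofReal (Real.exp (-(m * s)))) ∂μ :=
        setLIntegral_le_lintegral _ _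
    _ = μ (Ioc 0 s) + ENNReal.ofReal (Real.exp (-(m * s))) * μ univ := by
        rw [lintegral_add_left (measurable_one.indicator measurableSet_Ioc),
          lintegral_indicator_one measurableSet_Ioc, lintegral_const]

variable [IsFiniteMeasure μ]

theorem laplaceIoc_le (hm : 0 ≤ m) (s : ℝ) :
    laplaceIoc μ c m ≤ (μ (Ioc 0 s)).toReal + Real.exp (-(m * s)) * (μ univ).toReal := by
  have := ENNReal.toReal_mono (by finiteness) (lintegral_exp_neg_mul_le μ (c := c) hm s)
  rwa [ENNReal.toReal_add (by finiteness) (by finiteness), ENNReal.toReal_mul,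
    ENNReal.toReal_ofReal (Real.exp_pos _).le] at this

theorem exp_neg_mul_mul_le_laplaceIoc (hm : 0 ≤ m) {s : ℝ} (hs : s ≤ c) :
    Real.exp (-(m * s)) * (μ (Ioc 0 s)).toReal ≤ laplaceIoc μ c m := by
  rw [← ENNReal.toReal_ofReal (Real.exp_pos _).le, ← ENNReal.toReal_mul]
  refine ENNReal.toReal_mono ((lintegral_exp_neg_mul_le μ hm 0).trans_lt (by finiteness)).ne ?_
  calc ENNReal.ofReal (Real.exp (-(m * s))) * μ (Ioc 0 s)
      = ∫⁻ _ in Ioc 0 s, ENNReal.ofReal (Real.exp (-(m * s))) ∂μ := (setLIntegral_const _ _).symm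
    _ ≤ ∫⁻ u in Ioc 0 s, ENNReal.ofReal (Real.exp (-(m * u))) ∂μ :=
        setLIntegral_mono' measurableSet_Ioc fun u hu => ENNReal.ofReal_le_ofReal
          (Real.exp_le_exp.2 (neg_le_neg (mul_le_mul_of_nonneg_left hu.2 hm)))
    _ ≤ ∫⁻ u in Ioc 0 c, ENNReal.ofReal (Real.exp (-(m * u))) ∂μ :=
        lintegral_mono_set (Ioc_subset_Ioc_right hs)

theorem antitone_logTail : Antitone (logTail μ) := fun _ _ hxy =>
  ENNReal.toReal_mono (measure_ne_top _ _)
    (measure_mono (Ioc_subset_Ioc_right (Real.exp_le_exp.2 (neg_le_neg hxy))))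

theorem exp_neg_inv_mul_logTail_le_laplaceIoc {x : ℝ} (hx : 1 ≤ x) (hxc : Real.exp (-x) ≤ c) :
    Real.exp (-x⁻¹) * logTail μ (x + Real.log x) ≤ laplaceIoc μ c (Real.exp x) := by
  have hms : Real.exp x * Real.exp (-(x + Real.log x)) = x⁻¹ := by
    rw [← Real.exp_add, show x + -(x + Real.log x) = -Real.log x by ring, Real.exp_neg,
      Real.exp_log (by linarith)]
  have hs : Real.exp (-(x + Real.log x)) ≤ c :=
    (Real.exp_le_exp.2 (by linarith [Real.log_nonneg hx])).trans hxc
  have := exp_neg_mul_mul_le_laplaceIoc μ (Real.exp_pos x).le hs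
  rwa [hms] at this

theorem laplaceIoc_exp_le {x : ℝ} (hx : 0 < x) :
    laplaceIoc μ c (Real.exp x) ≤
      logTail μ (x - Real.log x) + Real.exp (-x) * (μ univ).toReal := by
  have hms : Real.exp x * Real.exp (-(x - Real.log x)) = x := by
    rw [← Real.exp_add, show x + -(x - Real.log x) = Real.log x by ring, Real.exp_log hx]
  have := laplaceIoc_le μ (c := c) (Real.exp_pos x).le (Real.exp (-(x - Real.log x)))
  rwa [hms] at this

end Laplace

theorem tendsto_add_mul_log_div_self (σ : ℝ) :
    Tendsto (fun x => (x + σ * Real.log x) / x) atTop (𝓝 1) := by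
  have := (Real.isLittleO_log_id_atTop.tendsto_div_nhds_zero.const_mul σ).const_add 1
  rw [mul_zero, add_zero] at this
  refine this.congr' ?_
  filter_upwards [eventually_gt_atTop 0] with x hx
  simp only [id_eq]
  field_simp

theorem tendsto_laplaceIoc_exp_div_logTail (μ : Measure ℝ) [IsFiniteMeasure μ] {c ρ : ℝ}
    (hc : 0 < c) (hpos : ∀ᶠ x in atTop, 0 < logTail μ x)
    (hrv : IsRegularlyVarying (logTail μ) ρ) :
    Tendsto (fun x => laplaceIoc μ c (Real.exp x) / logTail μ x) atTop (𝓝 1) := by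
  have hanti := antitone_logTail μ
  have hshift (σ : ℝ) :
      Tendsto (fun x => logTail μ (x + σ * Real.log x) / logTail μ x) atTop (𝓝 1) :=
    hanti.tendsto_comp_div_of_isRegularlyVarying hpos hrv (tendsto_add_mul_log_div_self σ)
  have hlower : Tendsto (fun x => Real.exp (-x⁻¹) *
      (logTail μ (x + Real.log x) / logTail μ x)) atTop (𝓝 1) := by
    have hinv := (tendsto_inv_atTop_zero (𝕜 := ℝ)).neg
    rw [neg_zero] at hinv
    simpa using (Real.tendsto_exp_nhds_zero_nhds_one.comp hinv).mul (hshift 1)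
  have hupper : Tendsto (fun x => logTail μ (x - Real.log x) / logTail μ x +
      Real.exp (-x) / logTail μ x * (μ univ).toReal) atTop (𝓝 1) := by
    simpa [sub_eq_add_neg] using (hshift (-1)).add
      ((hanti.tendsto_exp_neg_div_of_isRegularlyVarying hpos hrv).mul_const (μ univ).toReal)
  refine tendsto_of_tendsto_of_tendsto_of_le_of_le' hlower hupper ?_ ?_
  · filter_upwards [hpos, eventually_ge_atTop 1,
      Real.tendsto_exp_neg_atTop_nhds_zero.eventually_le_const hc] with x hVx hx hxc
    rw [← mul_div_assoc]
    exact div_le_div_of_nonneg_right (exp_neg_inv_mul_logTail_le_laplaceIoc μ hx hxc) hVx.le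
  · filter_upwards [hpos, eventually_gt_atTop 0] with x hVx hx
    rw [div_mul_eq_mul_div, ← add_div]
    exact div_le_div_of_nonneg_right (laplaceIoc_exp_le μ hx) hVx.le

theorem tauberian_slowly_varying_general
    (μ : Measure ℝ) [IsFiniteMeasure μ]
    (c : ℝ) (hc : 0 < c)
    (α : ℝ)
    (L : ℝ → ℝ)
    (hsv : ∀ t > (0:ℝ), Tendsto (fun x => L (t * x) / L x) atTop (nhds 1))
    (hU : Tendsto
      (fun u : ℝ =>
        (μ (Set.Ioc 0 u)).toReal /
          ((-Real.log u) ^ (-α) * L (-Real.log u)))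
      (nhdsWithin 0 (Set.Ioi 0)) (nhds 1)) :
    Tendsto
      (fun m : ℝ =>
        (∫⁻ u in Set.Ioc 0 c, ENNReal.ofReal (Real.exp (-(m * u))) ∂μ).toReal /
          ((Real.log m) ^ (-α) * L (Real.log m)))
      atTop (nhds 1) := by
  have hVG : Tendsto (fun x => logTail μ x / (x ^ (-α) * L x)) atTop (𝓝 1) := by
    have hu : Tendsto (fun x => Real.exp (-x)) atTop (𝓝[>] 0) := tendsto_nhdsWithin_iff.2
      ⟨Real.tendsto_exp_neg_atTop_nhds_zero, .of_forall fun x => Real.exp_pos _⟩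
    refine (hU.comp hu).congr fun x => ?_
    simp only [Function.comp_apply, Real.log_exp, neg_neg, logTail]
  have hpos : ∀ᶠ x in atTop, 0 < logTail μ x := by
    filter_upwards [hVG.eventually_ne one_ne_zero] with x hx
    exact ENNReal.toReal_nonneg.lt_of_ne (div_ne_zero_iff.1 hx).1.symm
  have hrv : IsRegularlyVarying (logTail μ) (-α) :=
    (IsRegularlyVarying.rpow_mul (fun t ht => by simpa using hsv t ht) (-α)).congr_isEquivalent
      (isEquivalent_of_tendsto_one hVG)
  have hlaplace := (tendsto_laplaceIoc_exp_div_logTail μ hc hpos hrv).mul hVG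
  rw [one_mul] at hlaplace
  refine (hlaplace.comp Real.tendsto_log_atTop).congr' ?_
  filter_upwards [eventually_gt_atTop 0, Real.tendsto_log_atTop.eventually hpos] with m hm hVm
  simp only [Function.comp_apply, Real.exp_log hm]
  rw [div_mul_div_cancel₀ hVm.ne']
  rfl

theorem tauberian_slowly_varying
    (μ : Measure ℝ) [IsFiniteMeasure μ]
    (c : ℝ) (hc : 0 < c) (hsupp : μ (Set.Ioc 0 c)ᶜ = 0)
    (α : ℝ) (hα : 0 < α)
    (L : ℝ → ℝ) (hLpos : ∀ x, 0 < L x) (hLmeas : Measurable L)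
    (hsv : ∀ t > (0:ℝ), Tendsto (fun x => L (t * x) / L x) atTop (nhds 1))
    (hU : Tendsto
      (fun u : ℝ =>
        (μ (Set.Ioc 0 u)).toReal /
          ((-Real.log u) ^ (-α) * L (-Real.log u)))
      (nhdsWithin 0 (Set.Ioi 0)) (nhds 1)) :
    Tendsto
      (fun m : ℝ =>
        (∫⁻ u in Set.Ioc 0 c, ENNReal.ofReal (Real.exp (-(m * u))) ∂μ).toReal /
          ((Real.log m) ^ (-α) * L (Real.log m)))
      atTop (nhds 1) :=
  tauberian_slowly_varying_general μ c hc α L hsv hU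
end
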